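/- In a Moufang loop that is also an A-loop (all inner mappings are automorphisms), 3x ∈ N(Q) for every x ∈ Q. -/
import Mathlib


universe u

class Loop (Q : Type u) extends Add Q, Zero Q where
  addLeft_bijective : ∀ a : Q, Function.Bijective (fun x => a + x)
  addRight_bijective : ∀ a : Q, Function.Bijective (fun x => x + a)
  zero_add : ∀ a : Q, 0 + a = a
  add_zero : ∀ a : Q, a + 0 = a

/-- The commutant `C(Q)` of a loop. -/
def commutant (Q : Type u) [Loop Q] : Set Q := {a | ∀ x, a + x = x + a}

/-- The Moufang center `K(Q)` of a loop. -/
def moufangCenter (Q : Type u) [Loop Q] : Set Q :=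
  {a | ∀ x y, (a + a) + (x + y) = (a + x) + (a + y)}

/-- The nucleus `N(Q)` of a loop. -/
def nucleus (Q : Type u) [Loop Q] : Set Q :=
  {a | ∀ x y, ((a + x) + y = a + (x + y)) ∧ ((x + a) + y = x + (a + y)) ∧
    ((x + y) + a = x + (y + a))}

/-- The Moufang identity. -/
def IsMoufang (Q : Type u) [Loop Q] : Prop :=
  ∀ x y z : Q, x + (y + (x + z)) = ((x + y) + x) + z

/-- The multiplication group of a loop, as a subgroup of the permutation group. -/
def mlt (Q : Type u) [Loop Q] : Subgroup (Equiv.Perm Q) :=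
  Subgroup.closure
    {e : Equiv.Perm Q | (∃ a : Q, ∀ x, e x = a + x) ∨ (∃ a : Q, ∀ x, e x = x + a)}

/-- An A-loop: every inner mapping (element of the multiplication group fixing 0)
is an automorphism. -/
def IsALoop (Q : Type u) [Loop Q] : Prop :=
  ∀ φ ∈ mlt Q, φ (0 : Q) = 0 → ∀ x y : Q, φ (x + y) = φ x + φ y

section MoufangAux

variable {Q : Type u} [Loop Q]

/-- The (right) negation in a loop: `x + mneg x = 0`. -/
private noncomputable def mneg (x : Q) : Q := (Equiv.ofBijective _ (Loop.addLeft_bijective x)).symm 0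

private theorem madd_neg (x : Q) : x + mneg x = 0 :=
  (Equiv.ofBijective _ (Loop.addLeft_bijective x)).apply_symm_apply 0

private theorem mleft_cancel {x a b : Q} (h : x + a = x + b) : a = b :=
  (Loop.addLeft_bijective x).injective h

private theorem mflex (hM : IsMoufang Q) (x y : Q) : x + (y + x) = (x + y) + x := by
  have h := hM x y 0
  simpa [Loop.add_zero] using h

private theorem mrip1 (hM : IsMoufang Q) (w x : Q) : (w + x) + mneg x = w := by
  obtain ⟨y, rfl⟩ := (Loop.addLeft_bijective x).surjective w
  have h := hM x y (mneg x)
  rw [madd_neg, Loop.add_zero] at h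
  exact h.symm

private theorem mrip2 (hM : IsMoufang Q) (w x : Q) : (w + mneg x) + x = w := by
  obtain ⟨u, rfl⟩ := (Loop.addRight_bijective x).surjective w
  show ((u + x) + mneg x) + x = u + x
  rw [mrip1 hM]

private theorem mneg_add (hM : IsMoufang Q) (x : Q) : mneg x + x = 0 := by
  have h := mrip2 hM 0 x
  rwa [Loop.zero_add] at h

private theorem mlip1 (hM : IsMoufang Q) (x z : Q) : mneg x + (x + z) = z := by
  have h := hM x (mneg x) z
  rw [madd_neg, Loop.zero_add] at h
  exact mleft_cancel h

private theorem mlip2 (hM : IsMoufang Q) (x z : Q) : x + (mneg x + z) = z := by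
  obtain ⟨u, rfl⟩ := (Loop.addLeft_bijective x).surjective z
  rw [mlip1 hM]

private theorem mneg_neg (hM : IsMoufang Q) (x : Q) : mneg (mneg x) = x := by
  apply mleft_cancel (x := mneg x)
  rw [madd_neg, mneg_add hM]

private theorem mneg_inj (hM : IsMoufang Q) {a b : Q} (h : mneg a = mneg b) : a = b := by
  rw [← mneg_neg hM a, h, mneg_neg hM]

private theorem maaip (hM : IsMoufang Q) (x y : Q) : mneg (x + y) = mneg y + mneg x := by
  have h1 : mneg (x + y) + x = mneg y := by
    have h := mlip1 hM (x + y) (mneg y)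
    rwa [mrip1 hM] at h
  calc mneg (x + y) = (mneg (x + y) + x) + mneg x := (mrip1 hM _ x).symm
    _ = mneg y + mneg x := by rw [h1]

private theorem mM4 (hM : IsMoufang Q) (z x y : Q) :
    ((z + x) + y) + x = z + (x + (y + x)) := by
  apply mneg_inj hM
  have hL : mneg (((z + x) + y) + x)
      = mneg x + (mneg y + (mneg x + mneg z)) := by
    rw [maaip hM, maaip hM, maaip hM]
  have hR : mneg (z + (x + (y + x)))
      = ((mneg x + mneg y) + mneg x) + mneg z := by
    rw [maaip hM, maaip hM, maaip hM]
  rw [hL, hR, hM (mneg x) (mneg y) (mneg z)]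

private theorem mM1 (hM : IsMoufang Q) (x y z : Q) :
    (x + y) + (z + x) = (x + (y + z)) + x := by
  have step1 : x + (y + z) = ((x + y) + x) + (mneg x + z) := by
    have h := hM x y (mneg x + z)
    rwa [mlip2 hM] at h
  have step3 : x + ((mneg x + z) + x) = z + x := by
    rw [mflex hM, mlip2 hM]
  have main : (x + (y + z)) + x = (x + y) + (z + x) := by
    calc (x + (y + z)) + x = (((x + y) + x) + (mneg x + z)) + x := by rw [← step1]
      _ = (x + y) + (x + ((mneg x + z) + x)) := mM4 hM (x + y) x (mneg x + z)
      _ = (x + y) + (z + x) := by rw [step3]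
  exact main.symm

private theorem mpsB (hM : IsMoufang Q) (x v u : Q) :
    (v + mneg x) + (x + (u + x)) = (v + u) + x := by
  have hA : (x + mneg v) + ((v + u) + x) = x + (u + x) := by
    have h := mM1 hM x (mneg v) (v + u)
    rw [mlip1 hM] at h
    rw [h, mflex hM]
  have hneg : v + mneg x = mneg (x + mneg v) := by
    rw [maaip hM, mneg_neg hM]
  rw [hneg, ← hA, mlip1 hM]

private theorem mP0 (hM : IsMoufang Q) (x y z : Q) :
    ((x + y) + mneg x) + (x + ((z + x) + x)) = ((x + (y + z)) + x) + x := by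
  rw [mpsB hM x (x + y) (z + x), mM1 hM]

private theorem mP1 (hM : IsMoufang Q) (x y : Q) :
    ((x + y) + mneg x) + (x + (x + x)) = ((x + y) + x) + x := by
  have h := mP0 hM x y 0
  simpa [Loop.zero_add, Loop.add_zero] using h

private theorem mP2 (hM : IsMoufang Q) (x z : Q) :
    x + ((z + x) + x) = ((x + z) + x) + x := by
  rw [mflex hM x (z + x), mflex hM x z]

/-- `T_x` is a pseudo-automorphism with companion `3x = x + (x + x)`. -/
private theorem mpseudo (hM : IsMoufang Q) (x y z : Q) :
    ((x + y) + mneg x) + (((x + z) + mneg x) + (x + (x + x)))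
      = ((x + (y + z)) + mneg x) + (x + (x + x)) := by
  rw [mP1 hM x z, ← mP2 hM, mP0 hM, ← mP1 hM x (y + z)]

/-- Using the A-loop property: `3x` is in the right nucleus. -/
private theorem mnrho (hM : IsMoufang Q) (hA : IsALoop Q) (x : Q) :
    ∀ u v : Q, (u + v) + (x + (x + x)) = u + (v + (x + (x + x))) := by
  classical
  let eL : Equiv.Perm Q := Equiv.ofBijective _ (Loop.addLeft_bijective x)
  let eR : Equiv.Perm Q := Equiv.ofBijective _ (Loop.addRight_bijective (mneg x))
  let T : Equiv.Perm Q := eR * eL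
  have hTapp : ∀ w : Q, T w = (x + w) + mneg x := fun w => rfl
  have hTmem : T ∈ mlt Q := by
    refine Subgroup.mul_mem _ ?_ ?_
    · exact Subgroup.subset_closure (Or.inr ⟨mneg x, fun w => rfl⟩)
    · exact Subgroup.subset_closure (Or.inl ⟨x, fun w => rfl⟩)
  have hT0 : T (0 : Q) = 0 := by
    rw [hTapp, Loop.add_zero, madd_neg]
  have hAuto := hA T hTmem hT0
  intro u v
  obtain ⟨y, hy⟩ : ∃ w, (x + w) + mneg x = u :=
    ⟨mneg x + (u + x), by rw [mlip2 hM, mrip1 hM]⟩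
  obtain ⟨z, hz⟩ : ∃ w, (x + w) + mneg x = v :=
    ⟨mneg x + (v + x), by rw [mlip2 hM, mrip1 hM]⟩
  have hadd := hAuto y z
  rw [hTapp, hTapp, hTapp] at hadd
  calc (u + v) + (x + (x + x))
      = (((x + y) + mneg x) + ((x + z) + mneg x)) + (x + (x + x)) := by rw [hy, hz]
    _ = ((x + (y + z)) + mneg x) + (x + (x + x)) := by rw [← hadd]
    _ = ((x + y) + mneg x) + (((x + z) + mneg x) + (x + (x + x))) :=
        (mpseudo hM x y z).symm
    _ = u + (v + (x + (x + x))) := by rw [hy, hz]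

private theorem mnrho_neg (hM : IsMoufang Q) {a : Q}
    (h : ∀ u v : Q, (u + v) + a = u + (v + a)) :
    ∀ u v : Q, (u + v) + mneg a = u + (v + mneg a) := by
  intro u v
  have hv : (v + mneg a) + a = v := mrip2 hM v a
  calc (u + v) + mneg a = (u + ((v + mneg a) + a)) + mneg a := by rw [hv]
    _ = ((u + (v + mneg a)) + a) + mneg a := by rw [← h u (v + mneg a)]
    _ = u + (v + mneg a) := mrip1 hM _ a

private theorem mnlam_of_nrho (hM : IsMoufang Q) {a : Q}
    (h : ∀ u v : Q, (u + v) + a = u + (v + a)) :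
    ∀ s t : Q, (mneg a + s) + t = mneg a + (s + t) := by
  intro s t
  have h0 := congrArg mneg (h (mneg t) (mneg s))
  simp only [maaip hM, mneg_neg hM] at h0
  exact h0.symm

private theorem mnmu_of_nlam (hM : IsMoufang Q) {a : Q}
    (hl : ∀ s t : Q, (a + s) + t = a + (s + t)) :
    ∀ x y : Q, (x + a) + y = x + (a + y) := by
  intro x y
  have hK : ∀ w : Q, x + ((a + x) + w) = (x + (a + x)) + w := by
    intro w
    have h := hM x a w
    rw [← hl x w] at h
    rw [← mflex hM x a] at h
    exact h
  have hs : ((mneg x) + (y + mneg x)) + x = mneg x + y := by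
    rw [mflex hM (mneg x) y]
    exact mrip2 hM (mneg x + y) x
  calc (x + a) + y
      = ((((x + a) + x) + mneg x) + y) := by rw [mrip1 hM (x + a) x]
    _ = (((((x + a) + x) + mneg x) + y) + mneg x) + x := (mrip2 hM _ x).symm
    _ = (((x + a) + x) + (mneg x + (y + mneg x))) + x := by
        rw [mM4 hM ((x + a) + x) (mneg x) y]
    _ = ((x + (a + x)) + (mneg x + (y + mneg x))) + x := by rw [← mflex hM x a]
    _ = (x + ((a + x) + (mneg x + (y + mneg x)))) + x := by rw [← hK]
    _ = x + (((a + x) + (mneg x + (y + mneg x))) + x) := by rw [← mflex hM]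
    _ = x + (a + (x + ((mneg x + (y + mneg x)) + x))) := by
        rw [mM4 hM a x (mneg x + (y + mneg x))]
    _ = x + (a + (x + (mneg x + y))) := by rw [hs]
    _ = x + (a + y) := by rw [mlip2 hM]

end MoufangAux

theorem moufang_Aloop_three_x_in_nucleus (Q : Type u) [Loop Q]
    (hM : IsMoufang Q) (hA : IsALoop Q) :
    ∀ x : Q, x + (x + x) ∈ nucleus Q := by
  intro x
  have hrho : ∀ u v : Q, (u + v) + (x + (x + x)) = u + (v + (x + (x + x))) :=
    mnrho hM hA x
  have hrhon := mnrho_neg hM hrho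
  have hlamn := mnlam_of_nrho hM hrhon
  simp only [mneg_neg hM] at hlamn
  have hmu := mnmu_of_nlam hM hlamn
  intro x0 y0
  exact ⟨hlamn x0 y0, hmu x0 y0, hrho x0 y0⟩
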